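/- Let R be a commutative QF ring (noetherian and injective as a module over itself) and C an R-coalgebra that is projective as an R-module. Assume C^* is nearly left noetherian, i.e. every left ideal I of C^* with C^*/I finitely generated as an R-module is finitely generated as a left C^*-module. Then the class of left C^*-modules all of whose elements are C-rational is closed under extensions: for every exact sequence 0 → N → M → L → 0 of left C^*-modules in which every element of N and of L is C-rational, every element of M is C-rational. -/
import Mathlib


open TensorProduct

/-- The convolution product on `C^* = Hom_R(C,R)`: `(f ⋆ g)(c) = Σ f(c₁) g(c₂)`. -/
noncomputable def convProd {R C : Type*} [CommRing R] [AddCommGroup C] [Module R C]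
    [Coalgebra R C] (f g : Module.Dual R C) : Module.Dual R C :=
  (LinearMap.mul' R R) ∘ₗ (TensorProduct.map f g) ∘ₗ Coalgebra.comul

/-- A left module structure over the convolution algebra `C^*` on an `R`-module `M`,
given by an `R`-bilinear action compatible with the convolution product and with the
unit `ε_C` of `C^*`. -/
def IsDualModuleAction {R C M : Type*} [CommRing R] [AddCommGroup C] [Module R C]
    [Coalgebra R C] [AddCommGroup M] [Module R M]
    (act : Module.Dual R C →ₗ[R] M →ₗ[R] M) : Prop :=
  (∀ f g : Module.Dual R C, act (convProd f g) = (act f) ∘ₗ (act g)) ∧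
  act (Coalgebra.counit (R := R) (A := C)) = LinearMap.id

/-- An element `m` of a left `C^*`-module is `C`-rational if there are finitely many
`m_i` and `c_i` with `g • m = Σ g(c_i) • m_i` for all `g ∈ C^*`. -/
def IsRationalElem {R C M : Type*} [CommRing R] [AddCommGroup C] [Module R C]
    [Coalgebra R C] [AddCommGroup M] [Module R M]
    (act : Module.Dual R C →ₗ[R] M →ₗ[R] M) (m : M) : Prop :=
  ∃ (n : ℕ) (ms : Fin n → M) (cs : Fin n → C),
    ∀ g : Module.Dual R C, act g m = ∑ i, g (cs i) • ms i

section Helpers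

variable {R C : Type*} [CommRing R] [AddCommGroup C] [Module R C] [Coalgebra R C]

theorem convProd_eval (f g : Module.Dual R C) (c : C) :
    convProd f g c = f (((TensorProduct.rid R C).toLinearMap ∘ₗ
      LinearMap.lTensor C g ∘ₗ Coalgebra.comul) c) := by
  simp only [convProd, LinearMap.comp_apply, LinearEquiv.coe_coe]
  induction (Coalgebra.comul (R := R) (A := C) c) using TensorProduct.induction_on with
  | zero => simp
  | tmul a b => simp [mul_comm]
  | add x y hx hy => simp [map_add, hx, hy]

end Helpers

section FinQuot

variable {R : Type*} [CommRing R] [IsNoetherianRing R]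
variable {A M : Type*} [AddCommGroup A] [Module R A] [AddCommGroup M] [Module R M]

theorem finite_quot_ker (ψ : A →ₗ[R] M) (T : Submodule R M) (hT : T.FG)
    (hr : LinearMap.range ψ ≤ T) : Module.Finite R (A ⧸ LinearMap.ker ψ) := by
  haveI : Module.Finite R T := Module.Finite.iff_fg.mpr hT
  have hfg : (LinearMap.range ψ).FG := by
    have h1 : (Submodule.comap T.subtype (LinearMap.range ψ)).FG :=
      IsNoetherian.noetherian _
    have h2 : Submodule.map T.subtype (Submodule.comap T.subtype (LinearMap.range ψ)) =
        LinearMap.range ψ := by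
      rw [Submodule.map_comap_subtype]
      exact inf_eq_right.mpr hr
    exact h2 ▸ h1.map T.subtype
  haveI : Module.Finite R (LinearMap.range ψ) := Module.Finite.iff_fg.mpr hfg
  exact Module.Finite.equiv ψ.quotKerEquivRange.symm

end FinQuot

section Artinian
variable {R : Type*} [CommRing R] [IsNoetherianRing R] [Module.Injective R R]

theorem ann_ann_of_selfinj (I : Ideal R) : (Submodule.annihilator I).annihilator = I := by
  refine le_antisymm ?_ ?_
  · obtain ⟨n, x, hx⟩ : ∃ (n : ℕ) (x : Fin n → R), Submodule.span R (Set.range x) = I := by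
      obtain ⟨s, hs⟩ := IsNoetherian.noetherian I
      exact (Submodule.fg_iff_exists_fin_generating_family).mp ⟨s, hs⟩
    intro y hy
    set φ : R →ₗ[R] (Fin n → R) := LinearMap.pi (fun t => LinearMap.toSpanSingleton R R (x t)) with hφ
    have hker : LinearMap.ker φ = Submodule.annihilator I := by
      ext r
      simp only [LinearMap.mem_ker, hφ, LinearMap.pi_apply, LinearMap.toSpanSingleton_apply,
        funext_iff, Pi.zero_apply, Submodule.mem_annihilator]
      constructor
      · intro h z hz
        rw [← hx] at hz
        induction hz using Submodule.span_induction with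
        | mem z hz => obtain ⟨t, rfl⟩ := hz; exact h t
        | zero => simp
        | add a b _ _ ha hb => rw [smul_add, ha, hb, add_zero]
        | smul a c _ hc => rw [smul_comm, hc, smul_zero]
      · intro h t
        exact h (x t) (hx ▸ Submodule.subset_span ⟨t, rfl⟩)
    set f : (R ⧸ Submodule.annihilator I) →ₗ[R] (Fin n → R) :=
      (Submodule.annihilator I).liftQ φ (le_of_eq hker.symm) with hf
    have hfinj : Function.Injective f := by
      rw [← LinearMap.ker_eq_bot, hf, Submodule.ker_liftQ_eq_bot _ _ _ (le_of_eq hker)]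
    set g : (R ⧸ Submodule.annihilator I) →ₗ[R] R :=
      (Submodule.annihilator I).liftQ (LinearMap.toSpanSingleton R R y) (by
        intro r hr
        simp only [LinearMap.mem_ker, LinearMap.toSpanSingleton_apply]
        have := (Submodule.mem_annihilator.mp hy) r hr
        rwa [smul_eq_mul, mul_comm, ← smul_eq_mul] at this) with hg
    obtain ⟨h, hh⟩ := Module.Injective.out f hfinj g
    have h1 : y = h (f ((Submodule.annihilator I).mkQ 1)) := by
      rw [hh]
      have := LinearMap.congr_fun ((Submodule.annihilator I).liftQ_mkQ
        (LinearMap.toSpanSingleton R R y) (by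
          intro r hr
          simp only [LinearMap.mem_ker, LinearMap.toSpanSingleton_apply]
          have := (Submodule.mem_annihilator.mp hy) r hr
          rwa [smul_eq_mul, mul_comm, ← smul_eq_mul] at this)) 1
      rw [hg]
      rw [LinearMap.comp_apply] at this
      rw [this, LinearMap.toSpanSingleton_apply, one_smul]
    have h2 : f ((Submodule.annihilator I).mkQ 1) = x := by
      have := LinearMap.congr_fun ((Submodule.annihilator I).liftQ_mkQ φ (le_of_eq hker.symm)) 1
      rw [LinearMap.comp_apply] at this
      rw [hf, this]
      ext t
      simp [hφ]
    rw [h1, h2]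
    have hxx : (x : Fin n → R) = ∑ t, x t • (Pi.single t (1:R) : Fin n → R) := by
      ext u
      simp [Finset.sum_apply, Pi.single_apply, mul_comm]
    rw [hxx, map_sum]
    refine Submodule.sum_mem _ (fun t _ => ?_)
    rw [map_smul, smul_eq_mul]
    exact Ideal.mul_mem_right _ _ (hx ▸ Submodule.subset_span ⟨t, rfl⟩)
  · intro y hy
    rw [Submodule.mem_annihilator]
    intro r hr
    have := (Submodule.mem_annihilator.mp hr) y hy
    rwa [smul_eq_mul, mul_comm, ← smul_eq_mul] at this

theorem isArtinianRing_of_selfinj : IsArtinianRing R := by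
  have hwf : WellFounded (· > · : Ideal R → Ideal R → Prop) :=
    (isNoetherian_iff (R := R) (M := R)).mp (by infer_instance)
  have key : ∀ I J : Ideal R, I < J → (Submodule.annihilator J) < (Submodule.annihilator I) := by
    intro I J hIJ
    have hle : Submodule.annihilator J ≤ Submodule.annihilator I := by
      intro r hr
      rw [Submodule.mem_annihilator] at hr ⊢
      exact fun n hn => hr n (le_of_lt hIJ hn)
    refine lt_of_le_of_ne hle ?_
    intro heq
    have : I = J := by
      rw [← ann_ann_of_selfinj I, ← ann_ann_of_selfinj J, heq]
    exact absurd this (ne_of_lt hIJ)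
  have hinv : WellFounded (InvImage (· > ·) (Submodule.annihilator (R := R) (M := R))) :=
    InvImage.wf _ hwf
  exact ⟨Subrelation.wf (fun {I J} h => key I J h) hinv⟩

end Artinian

section Coset
variable {R : Type*} [CommRing R] [IsArtinianRing R]

theorem coset_inter {ι : Type*} [Nonempty ι]
    (S : ι → Set R) (J : ι → Submodule R R)
    (h1 : ∀ i, (S i).Nonempty)
    (h2 : ∀ i, ∀ x ∈ S i, ∀ y ∈ S i, x - y ∈ J i)
    (h3 : ∀ i, ∀ x ∈ S i, ∀ y, x - y ∈ J i → y ∈ S i)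
    (hdir : ∀ i j, ∃ l, S l ⊆ S i ∩ S j) :
    ∃ x, ∀ i, x ∈ S i := by
  obtain ⟨Jm, ⟨im, hJm⟩, hmin⟩ :=
    IsArtinian.set_has_minimal (R := R) (M := R) (Set.range J) (Set.range_nonempty J)
  subst hJm
  have hsub : ∀ i, S im ⊆ S i := by
    intro i
    obtain ⟨l, hl⟩ := hdir im i
    obtain ⟨x₀, hx₀⟩ := h1 l
    have hJle : J l ≤ J im := by
      intro j hj
      have hy : x₀ - j ∈ S l := h3 l x₀ hx₀ (x₀ - j) (by simpa using hj)
      have := h2 im x₀ (hl hx₀).1 (x₀ - j) (hl hy).1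
      simpa using this
    have hJeq : J l = J im := by
      by_contra hne
      exact hmin (J l) ⟨l, rfl⟩ (lt_of_le_of_ne hJle hne)
    -- now S im ⊆ S l
    intro x hx
    have hdiff : x₀ - x ∈ J im := h2 im x₀ (hl hx₀).1 x hx
    have : x ∈ S l := h3 l x₀ hx₀ x (hJeq ▸ hdiff)
    exact (hl this).2
  obtain ⟨x₀, hx₀⟩ := h1 im
  exact ⟨x₀, fun i => hsub i hx₀⟩

end Coset

section CLS
variable {R : Type*} [CommRing R] [IsArtinianRing R]
variable {C D : Type*} [AddCommGroup C] [Module R C] [AddCommGroup D] [Module R D]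

/-- Closedness of the image of a dual map, over an artinian commutative ring. -/
theorem exists_dual_factor (Z : C →ₗ[R] D) (g₀ : C →ₗ[R] R)
    (hfin : ∀ ws : Finset C, ∃ H : D →ₗ[R] R, ∀ w ∈ ws, H (Z w) = g₀ w) :
    ∃ H : D →ₗ[R] R, ∀ w : C, H (Z w) = g₀ w := by
  classical
  set Good : Set (D × R) → Prop := fun s =>
    ∀ (ws : Finset C) (t : Finset (D × R)), ↑t ⊆ s →
      ∃ H : D →ₗ[R] R, (∀ w ∈ ws, H (Z w) = g₀ w) ∧ (∀ p ∈ t, H p.1 = p.2) with hGood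
  have hGoodEmpty : Good ∅ := by
    intro ws t ht
    obtain ⟨H, hH⟩ := hfin ws
    refine ⟨H, hH, ?_⟩
    intro p hp
    exact absurd (ht hp) (Set.notMem_empty p)
  obtain ⟨s, -, hsmax⟩ := zorn_subset_nonempty {s | Good s} (fun c hc hchain hcne => by
    refine ⟨⋃₀ c, ?_, fun s hs => Set.subset_sUnion_of_mem hs⟩
    intro ws t ht
    -- find a member of the chain containing t
    obtain ⟨s₀, hs₀c, hts₀⟩ : ∃ s₀ ∈ c, ↑t ⊆ s₀ := by
      induction t using Finset.induction_on with
      | empty =>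
          obtain ⟨s₀, hs₀⟩ := hcne
          exact ⟨s₀, hs₀, by simp⟩
      | @insert a t' ha ih =>
          have hsub : ↑t' ⊆ ⋃₀ c := by
            refine Set.Subset.trans ?_ ht
            simp
          obtain ⟨s₁, hs₁c, hts₁⟩ := ih hsub
          have ha' : a ∈ ⋃₀ c := ht (by simp)
          obtain ⟨s₂, hs₂c, has₂⟩ := ha'
          rcases hchain.total hs₁c hs₂c with h | h
          · exact ⟨s₂, hs₂c, by
              rw [Finset.coe_insert]
              exact Set.insert_subset has₂ (hts₁.trans h)⟩
          · exact ⟨s₁, hs₁c, by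
              rw [Finset.coe_insert]
              exact Set.insert_subset (h has₂) hts₁⟩
    exact hc hs₀c ws t hts₀) ∅ hGoodEmpty
  have hstotal : ∀ d : D, ∃ y, (d, y) ∈ s := by
    intro d
    by_contra hno
    push_neg at hno
    -- use the coset lemma to find a consistent value at d
    set ι₀ := {P : Finset C × Finset (D × R) // ↑P.2 ⊆ s} with hι₀
    have : Nonempty ι₀ := ⟨⟨(∅, ∅), by simp⟩⟩
    set SS : ι₀ → Set R := fun P =>
      {y | ∃ H : D →ₗ[R] R, (∀ w ∈ P.1.1, H (Z w) = g₀ w) ∧ (∀ p ∈ P.1.2, H p.1 = p.2) ∧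
        H d = y} with hSS
    set JJ : ι₀ → Submodule R R := fun P =>
      { carrier := {y | ∃ H : D →ₗ[R] R, (∀ w ∈ P.1.1, H (Z w) = 0) ∧ (∀ p ∈ P.1.2, H p.1 = 0) ∧
          H d = y}
        add_mem' := by
          rintro a b ⟨H₁, hw₁, ht₁, hd₁⟩ ⟨H₂, hw₂, ht₂, hd₂⟩
          exact ⟨H₁ + H₂, fun w hw => by simp [hw₁ w hw, hw₂ w hw],
            fun p hp => by simp [ht₁ p hp, ht₂ p hp], by simp [hd₁, hd₂]⟩
        zero_mem' := ⟨0, by simp, by simp, by simp⟩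
        smul_mem' := by
          rintro r a ⟨H₁, hw₁, ht₁, hd₁⟩
          exact ⟨r • H₁, fun w hw => by simp [hw₁ w hw], fun p hp => by simp [ht₁ p hp],
            by simp [hd₁]⟩ } with hJJ
    obtain ⟨y₀, hy₀⟩ := coset_inter SS JJ
      (fun P => by
        obtain ⟨H, hH1, hH2⟩ := hsmax.prop P.1.1 P.1.2 P.2
        exact ⟨H d, H, hH1, hH2, rfl⟩)
      (fun P x hx y hy => by
        obtain ⟨H₁, hw₁, ht₁, hd₁⟩ := hx
        obtain ⟨H₂, hw₂, ht₂, hd₂⟩ := hy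
        exact ⟨H₁ - H₂, fun w hw => by simp [hw₁ w hw, hw₂ w hw],
          fun p hp => by simp [ht₁ p hp, ht₂ p hp], by simp [hd₁, hd₂]⟩)
      (fun P x hx y hxy => by
        obtain ⟨H₁, hw₁, ht₁, hd₁⟩ := hx
        obtain ⟨H₂, hw₂, ht₂, hd₂⟩ := hxy
        exact ⟨H₁ - H₂, fun w hw => by simp [hw₁ w hw, hw₂ w hw],
          fun p hp => by simp [ht₁ p hp, ht₂ p hp], by
            simp only [LinearMap.sub_apply, hd₁, hd₂]
            ring⟩)
      (fun P Q => by
        refine ⟨⟨(P.1.1 ∪ Q.1.1, P.1.2 ∪ Q.1.2), ?_⟩, ?_⟩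
        · rw [Finset.coe_union]
          exact Set.union_subset P.2 Q.2
        · rintro y ⟨H, hw, ht, hd⟩
          constructor
          · exact ⟨H, fun w hw' => hw w (Finset.mem_union_left _ hw'),
              fun p hp => ht p (Finset.mem_union_left _ hp), hd⟩
          · exact ⟨H, fun w hw' => hw w (Finset.mem_union_right _ hw'),
              fun p hp => ht p (Finset.mem_union_right _ hp), hd⟩)
    -- extend s
    have hGoodExt : Good (insert (d, y₀) s) := by
      intro ws t ht
      have ht' : ↑(t.erase (d, y₀)) ⊆ s := by
        intro p hp
        rw [Finset.coe_erase] at hp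
        rcases ht hp.1 with h | h
        · exact absurd (by simp [h]) hp.2
        · exact h
      obtain ⟨H, hw, htt, hd⟩ := hy₀ ⟨(ws, t.erase (d, y₀)), ht'⟩
      refine ⟨H, hw, ?_⟩
      intro p hp
      by_cases hpd : p = (d, y₀)
      · rw [hpd]
        exact hd
      · exact htt p (Finset.mem_erase.mpr ⟨hpd, hp⟩)
    have hle : s ⊆ insert (d, y₀) s := Set.subset_insert _ _
    have := hsmax.2 hGoodExt hle
    exact hno y₀ (this (Set.mem_insert _ _))
  -- build the linear map from the total graph
  choose hfun hmem using hstotal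
  have hlin : ∀ (ws : Finset C) (t : Finset (D × R)), (∀ p ∈ t, p.2 = hfun p.1) →
      ∃ H : D →ₗ[R] R, (∀ w ∈ ws, H (Z w) = g₀ w) ∧ ∀ p ∈ t, H p.1 = hfun p.1 := by
    intro ws t hcond
    have hts : ↑t ⊆ s := by
      intro p hp
      have := hcond p hp
      have hp1 : p = (p.1, hfun p.1) := by
        ext <;> simp [this]
      rw [hp1]
      exact hmem p.1
    obtain ⟨H, hw, htt⟩ := hsmax.prop ws t hts
    exact ⟨H, hw, fun p hp => by rw [htt p hp, hcond p hp]⟩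
  have hadd : ∀ d₁ d₂ : D, hfun (d₁ + d₂) = hfun d₁ + hfun d₂ := by
    intro d₁ d₂
    obtain ⟨H, -, ht⟩ := hlin ∅ {(d₁, hfun d₁), (d₂, hfun d₂), (d₁ + d₂, hfun (d₁ + d₂))}
      (by intro p hp; simp at hp; rcases hp with h | h | h <;> simp [h])
    have h1 := ht (d₁, hfun d₁) (by simp)
    have h2 := ht (d₂, hfun d₂) (by simp)
    have h3 := ht (d₁ + d₂, hfun (d₁ + d₂)) (by simp)
    simp only at h1 h2 h3
    rw [← h1, ← h2, ← h3, map_add]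
  have hsmul : ∀ (r : R) (d₁ : D), hfun (r • d₁) = r • hfun d₁ := by
    intro r d₁
    obtain ⟨H, -, ht⟩ := hlin ∅ {(d₁, hfun d₁), (r • d₁, hfun (r • d₁))}
      (by intro p hp; simp at hp; rcases hp with h | h <;> simp [h])
    have h1 := ht (d₁, hfun d₁) (by simp)
    have h2 := ht (r • d₁, hfun (r • d₁)) (by simp)
    simp only at h1 h2
    rw [← h1, ← h2, map_smul]
  refine ⟨{ toFun := hfun, map_add' := hadd, map_smul' := hsmul }, ?_⟩
  intro w
  obtain ⟨H, hw, ht⟩ := hlin {w} {(Z w, hfun (Z w))} (by simp)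
  have h1 := ht (Z w, hfun (Z w)) (by simp)
  simp only at h1
  simp only [LinearMap.coe_mk, AddHom.coe_mk]
  rw [← h1]
  exact hw w (by simp)

end CLS

theorem rational_closed_under_extensions_of_nearly_left_noetherian
    {R C : Type*} [CommRing R] [Nontrivial R]
    -- `R` is a QF ring
    [IsNoetherianRing R] [Module.Injective R R]
    [AddCommGroup C] [Module R C] [Coalgebra R C]
    -- `C` is projective as an `R`-module
    [Module.Projective R C]
    -- `C^*` is nearly left noetherian: every `R`-cofinite left ideal of `C^*` is
    -- finitely generated as a left `C^*`-module
    (hnoeth : ∀ I : Submodule R (Module.Dual R C),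
      (∀ g ∈ I, ∀ h : Module.Dual R C, convProd h g ∈ I) →
      Module.Finite R (Module.Dual R C ⧸ I) →
      ∃ (k : ℕ) (gs : Fin k → Module.Dual R C), (∀ i, gs i ∈ I) ∧
        ∀ g ∈ I, ∃ hs : Fin k → Module.Dual R C, g = ∑ i, convProd (hs i) (gs i)) :
    -- then rationality is closed under extensions:
    ∀ (N M L : Type*) (_ : AddCommGroup N) (_ : AddCommGroup M) (_ : AddCommGroup L),
    ∀ (_ : Module R N) (_ : Module R M) (_ : Module R L),
    ∀ (actN : Module.Dual R C →ₗ[R] N →ₗ[R] N)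
      (actM : Module.Dual R C →ₗ[R] M →ₗ[R] M)
      (actL : Module.Dual R C →ₗ[R] L →ₗ[R] L),
      IsDualModuleAction actN → IsDualModuleAction actM → IsDualModuleAction actL →
    ∀ (ι : N →ₗ[R] M) (π : M →ₗ[R] L),
      (∀ (g : Module.Dual R C) (n : N), ι (actN g n) = actM g (ι n)) →
      (∀ (g : Module.Dual R C) (m : M), π (actM g m) = actL g (π m)) →
      Function.Injective ι → Function.Surjective π →
      LinearMap.range ι = LinearMap.ker π →
      (∀ n : N, IsRationalElem actN n) → (∀ l : L, IsRationalElem actL l) →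
      ∀ m : M, IsRationalElem actM m := by
  classical
  intro N M L _ _ _ _ _ _ actN actM actL haxN haxM haxL ι π hcommN hcommL hinj hsurj hkerr
    hratN hratL m
  haveI hart : IsArtinianRing R := isArtinianRing_of_selfinj
  -- Step I : the annihilator of π m is cofinite and left-stable
  set ψ : Module.Dual R C →ₗ[R] L := actL.flip (π m) with hψ
  obtain ⟨nL, ls, csL, hL⟩ := hratL (π m)
  have hψapp : ∀ g, ψ g = actL g (π m) := fun g => rfl
  have hrangeψ : LinearMap.range ψ ≤ Submodule.span R (Set.range ls) := by
    rintro x ⟨g, rfl⟩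
    rw [hψapp, hL g]
    exact Submodule.sum_mem _ fun i _ =>
      Submodule.smul_mem _ _ (Submodule.subset_span ⟨i, rfl⟩)
  haveI hIfin : Module.Finite R (Module.Dual R C ⧸ LinearMap.ker ψ) :=
    finite_quot_ker ψ _ (Submodule.fg_span (Set.finite_range ls)) hrangeψ
  have hIleft : ∀ g ∈ LinearMap.ker ψ, ∀ h, convProd h g ∈ LinearMap.ker ψ := by
    intro g hg h
    rw [LinearMap.mem_ker, hψapp, haxL.1 h g, LinearMap.comp_apply]
    rw [LinearMap.mem_ker, hψapp] at hg
    rw [hg, map_zero]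
  obtain ⟨k₁, gs, hgsI, hgen⟩ := hnoeth (LinearMap.ker ψ) hIleft hIfin
  -- Step II : elements n j with ι (n j) = actM (gs j) m, and their rationality data
  have hmemN : ∀ j, ∃ nj : N, ι nj = actM (gs j) m := by
    intro j
    have h0 : actM (gs j) m ∈ LinearMap.ker π := by
      rw [LinearMap.mem_ker, hcommL, ← hψapp]
      exact hgsI j
    rw [← hkerr] at h0
    exact h0
  choose nn hnn using hmemN
  choose kN msN csN hN using fun j => hratN (nn j)
  set V : Submodule R N := Submodule.span R (⋃ j, Set.range (msN j)) with hV
  have hVfg : V.FG :=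
    Submodule.fg_span (Set.finite_iUnion fun j => Set.finite_range _)
  -- Step III : the ideal ker ψ moves m into ι(V)
  have claim3 : ∀ g ∈ LinearMap.ker ψ, actM g m ∈ Submodule.map ι V := by
    intro g hg
    obtain ⟨hs, hdec⟩ := hgen g hg
    have : actM g m = ι (∑ j, actN (hs j) (nn j)) := by
      rw [hdec, map_sum, map_sum, LinearMap.sum_apply]
      refine Finset.sum_congr rfl fun j _ => ?_
      rw [haxM.1, LinearMap.comp_apply, ← hnn j, ← hcommN]
    rw [this]
    refine Submodule.mem_map_of_mem (Submodule.sum_mem _ fun j _ => ?_)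
    rw [hN j (hs j)]
    refine Submodule.sum_mem _ fun s _ => Submodule.smul_mem _ _ ?_
    exact Submodule.subset_span (Set.mem_iUnion.mpr ⟨j, ⟨s, rfl⟩⟩)
  -- Step IV : the annihilator K of m is cofinite and left-stable, hence fin. generated
  set χ : Module.Dual R C →ₗ[R] M := actM.flip m with hχ
  have hχapp : ∀ g, χ g = actM g m := fun g => rfl
  obtain ⟨p, fbar, hfbar⟩ := Module.Finite.exists_fin (R := R)
    (M := Module.Dual R C ⧸ LinearMap.ker ψ)
  have hlift : ∀ t, ∃ ft, (LinearMap.ker ψ).mkQ ft = fbar t :=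
    fun t => (LinearMap.ker ψ).mkQ_surjective _
  choose ff hff using hlift
  set X₀ : Submodule R M :=
    Submodule.span R (Set.range fun t => actM (ff t) m) ⊔ Submodule.map ι V with hX₀
  have hX₀fg : X₀.FG :=
    Submodule.FG.sup (Submodule.fg_span (Set.finite_range _)) (hVfg.map ι)
  have claim4 : LinearMap.range χ ≤ X₀ := by
    rintro x ⟨g, rfl⟩
    have hmem : (LinearMap.ker ψ).mkQ g ∈ Submodule.span R (Set.range fbar) := by
      rw [hfbar]; exact Submodule.mem_top
    rw [Submodule.mem_span_range_iff_exists_fun] at hmem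
    obtain ⟨c, hc⟩ := hmem
    have hgI : g - ∑ t, c t • ff t ∈ LinearMap.ker ψ := by
      rw [← Submodule.ker_mkQ (LinearMap.ker ψ), LinearMap.mem_ker, map_sub, map_sum]
      simp only [map_smul, hff]
      rw [hc, sub_self]
    have hsum : χ g = χ (g - ∑ t, c t • ff t) + χ (∑ t, c t • ff t) := by
      rw [← map_add, sub_add_cancel]
    rw [hsum, hX₀]
    refine Submodule.add_mem _ ?_ ?_
    · exact Submodule.mem_sup_right (claim3 _ hgI)
    · refine Submodule.mem_sup_left ?_
      rw [map_sum]
      refine Submodule.sum_mem _ fun t _ => ?_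
      rw [map_smul]
      exact Submodule.smul_mem _ _ (Submodule.subset_span ⟨t, rfl⟩)
  haveI hKfin : Module.Finite R (Module.Dual R C ⧸ LinearMap.ker χ) :=
    finite_quot_ker χ X₀ hX₀fg claim4
  have hKleft : ∀ g ∈ LinearMap.ker χ, ∀ h, convProd h g ∈ LinearMap.ker χ := by
    intro g hg h
    rw [LinearMap.mem_ker, hχapp, haxM.1 h g, LinearMap.comp_apply]
    rw [LinearMap.mem_ker, hχapp] at hg
    rw [hg, map_zero]
  obtain ⟨k₂, as, hasK, hKgen⟩ := hnoeth (LinearMap.ker χ) hKleft hKfin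
  -- Step V : a minimal member of the family of images of dual annihilators
  set mk : Module.Dual R C →ₗ[R] Module.Dual R C ⧸ LinearMap.ker χ :=
    (LinearMap.ker χ).mkQ with hmk
  set famS : Set (Submodule R (Module.Dual R C ⧸ LinearMap.ker χ)) :=
    {Q | ∃ W : Submodule R C, W.FG ∧ Q = Submodule.map mk W.dualAnnihilator} with hfamS
  obtain ⟨Qm, hQmmem, hminQ⟩ := IsArtinian.set_has_minimal famS
    ⟨_, ⊥, Submodule.fg_bot, rfl⟩
  obtain ⟨Wm, hWmfg, hQm⟩ := hQmmem
  have hkey : ∀ W : Submodule R C, W.FG →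
      Submodule.map mk ((Wm ⊔ W).dualAnnihilator) = Qm := by
    intro W hWfg
    have hle : Submodule.map mk ((Wm ⊔ W).dualAnnihilator) ≤ Qm := by
      rw [hQm]
      refine Submodule.map_mono ?_
      intro g hg
      rw [Submodule.mem_dualAnnihilator] at hg ⊢
      exact fun w hw => hg w (Submodule.mem_sup_left hw)
    have hmem : Submodule.map mk ((Wm ⊔ W).dualAnnihilator) ∈ famS :=
      ⟨Wm ⊔ W, hWmfg.sup hWfg, rfl⟩
    by_contra hne
    exact hminQ _ hmem (lt_of_le_of_ne hle hne)
  -- Step VI : the dual annihilator of Wm annihilates m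
  have stepVI : ∀ g₀ ∈ Wm.dualAnnihilator, actM g₀ m = 0 := by
    intro g₀ hg₀
    set ζ : Fin k₂ → (C →ₗ[R] C) := fun j =>
      (TensorProduct.rid R C).toLinearMap ∘ₗ LinearMap.lTensor C (as j) ∘ₗ Coalgebra.comul
      with hζ
    set Zmap : C →ₗ[R] (Fin k₂ → C) := LinearMap.pi ζ with hZmap
    have hfin : ∀ ws : Finset C, ∃ H : (Fin k₂ → C) →ₗ[R] R,
        ∀ w ∈ ws, H (Zmap w) = g₀ w := by
      intro ws
      have hmm : mk g₀ ∈ Submodule.map mk ((Wm ⊔ Submodule.span R ↑ws).dualAnnihilator) := by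
        rw [hkey _ (Submodule.fg_span ws.finite_toSet), hQm]
        exact Submodule.mem_map_of_mem hg₀
      obtain ⟨g₁, hg₁mem, hg₁eq⟩ := hmm
      have hgK : g₀ - g₁ ∈ LinearMap.ker χ := by
        have : mk (g₀ - g₁) = 0 := by rw [map_sub, hg₁eq, sub_self]
        rwa [hmk, ← LinearMap.mem_ker, Submodule.ker_mkQ] at this
      obtain ⟨hs, hdec⟩ := hKgen _ hgK
      refine ⟨∑ j, (hs j) ∘ₗ LinearMap.proj j, ?_⟩
      intro w hw
      have hg₁w : g₁ w = 0 :=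
        ((Submodule.mem_dualAnnihilator g₁).mp hg₁mem) w
          (Submodule.mem_sup_right (Submodule.subset_span hw))
      have h1 : (∑ j, (hs j) ∘ₗ LinearMap.proj j) (Zmap w)
          = ∑ j, hs j (ζ j w) := by
        rw [LinearMap.sum_apply]
        rfl
      have h2 : (g₀ - g₁) w = ∑ j, hs j (ζ j w) := by
        rw [hdec, LinearMap.sum_apply]
        refine Finset.sum_congr rfl fun j _ => ?_
        rw [convProd_eval]
      rw [h1, ← h2, LinearMap.sub_apply, hg₁w, sub_zero]
    obtain ⟨H, hH⟩ := exists_dual_factor Zmap g₀ hfin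
    have hdecomp : g₀ = ∑ j, convProd (H ∘ₗ LinearMap.single R (fun _ => C) j) (as j) := by
      refine LinearMap.ext fun w => ?_
      have h0 : Zmap w = ∑ j, Pi.single j (ζ j w) := by
        rw [Finset.univ_sum_single (fun j => ζ j w)]
        rfl
      have h1 : g₀ w = ∑ j, H (Pi.single j (ζ j w)) := by
        rw [← hH w, h0, map_sum]
      rw [h1, LinearMap.sum_apply]
      refine Finset.sum_congr rfl fun j _ => ?_
      rw [convProd_eval]
      rfl
    have hasK0 : ∀ j, actM (as j) m = 0 := fun j => hasK j
    rw [hdecomp, map_sum, LinearMap.sum_apply]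
    refine Finset.sum_eq_zero fun j _ => ?_
    rw [haxM.1, LinearMap.comp_apply, hasK0 j, map_zero]
  -- Step VII : reconstruction of the rationality data using projectivity of C
  obtain ⟨sC, hsC⟩ := Module.projective_def.mp (inferInstance : Module.Projective R C)
  obtain ⟨q, w, hw⟩ := Submodule.fg_iff_exists_fin_generating_family.mp hWmfg
  set S : Finset C := Finset.univ.biUnion (fun t => (sC (w t)).support) with hS
  set γ : C → Module.Dual R C := fun b => (Finsupp.lapply b) ∘ₗ sC with hγ
  have key2 : ∀ g : Module.Dual R C, (g - ∑ b ∈ S, g b • γ b) ∈ Wm.dualAnnihilator := by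
    intro g
    rw [Submodule.mem_dualAnnihilator]
    have hker2 : Wm ≤ LinearMap.ker (g - ∑ b ∈ S, g b • γ b) := by
      rw [← hw, Submodule.span_le]
      rintro _ ⟨t, rfl⟩
      rw [SetLike.mem_coe, LinearMap.mem_ker, LinearMap.sub_apply]
      have hgw : g (w t) = ∑ b ∈ S, (sC (w t)) b * g b := by
        conv_lhs => rw [← hsC (w t)]
        rw [Finsupp.linearCombination_apply]
        rw [Finsupp.sum, map_sum]
        rw [← Finset.sum_subset (Finset.subset_biUnion_of_mem
          (fun t => (sC (w t)).support) (Finset.mem_univ t))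
          (fun b _ hb => by
            rw [Finsupp.notMem_support_iff] at hb
            simp [hb])]
        refine Finset.sum_congr rfl fun b _ => ?_
        rw [map_smul, smul_eq_mul, id]
      have happ : (∑ b ∈ S, g b • γ b) (w t) = ∑ b ∈ S, g b * (sC (w t)) b := by
        rw [LinearMap.sum_apply]
        refine Finset.sum_congr rfl fun b _ => ?_
        rw [LinearMap.smul_apply, smul_eq_mul, hγ]
        rfl
      rw [happ, hgw]
      rw [← Finset.sum_sub_distrib]
      refine Finset.sum_eq_zero fun b _ => ?_
      rw [mul_comm, sub_self]
    intro wt hwt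
    exact hker2 hwt
  have main : ∀ g : Module.Dual R C, actM g m = ∑ b ∈ S, g b • actM (γ b) m := by
    intro g
    have h0 : actM (g - ∑ b ∈ S, g b • γ b) m = 0 := stepVI _ (key2 g)
    have h1 : actM g m = actM (∑ b ∈ S, g b • γ b) m := by
      have := sub_eq_zero.mp (by
        rw [← h0, map_sub, LinearMap.sub_apply])
      exact this
    rw [h1, map_sum, LinearMap.sum_apply]
    refine Finset.sum_congr rfl fun b _ => ?_
    rw [map_smul]
    rfl
  refine ⟨S.card, fun i => actM (γ ((S.equivFin.symm i : {x // x ∈ S}) : C)) m,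
    fun i => ((S.equivFin.symm i : {x // x ∈ S}) : C), fun g => ?_⟩
  rw [main g]
  rw [← Finset.sum_coe_sort S (fun b => g b • actM (γ b) m)]
  exact (Equiv.sum_comp S.equivFin.symm
    (fun x => g (x : C) • actM (γ (x : C)) m)).symm
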